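/- arXiv:1507.05770 — 4 statements merged into one kernel-verified Lean document; each statement's English description precedes it below -/
import Mathlib

section
/- For every N ≥ 2 and every monomial M(u) = u_1^{n_1} ⋯ u_k^{n_k} with n_i ≥ 1 and Σ n_i = N, there exist a probability vector (p_1,…,p_k) and polynomials d_{i,j}(u) of degree N−2 with nonpositive coefficients such that M(u) = Σ_{i=1}^k p_i u_i^N + Σ_{1≤i<j≤k} d_{i,j}(u)(u_i − u_j)² for all real u_1,…,u_k. -/
/-!
The weighted AM–GM polynomial `a x^(a+b) + b y^(a+b) - (a+b) x^a y^b` vanishes to second order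
on the diagonal, and its quotient by `(x - y)^2` is a sum of monomials of degree `a + b - 2`:
the first division by `x - y` gives `a x^a ∑ x^t y^(b-1-t) - b y^b ∑ x^s y^(a-1-s)`, a sum of
`a * b` differences `x^(a+t) y^(b-1-t) - x^s y^(a+b-1-s)`, each of which is `x - y` times a
geometric sum. Dividing by `a + b` and multiplying by the remaining variables writes a monomial
`m x_i^a x_j^b` as a convex combination of `m x_i^(a+b)` and `m x_j^(a+b)` plus `-E (x_i - x_j)^2`
with `E` homogeneous of degree `N - 2` with nonnegative coefficients. Both new monomials involve
one variable fewer, so induction on the number of variables ends at the pure powers `x_i^N`.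
-/

open Finset MvPolynomial

section AMGM

variable {R : Type*} [CommRing R]

def amgmQuotient (a b : ℕ) (x y : R) : R :=
  ∑ s ∈ range a, ∑ t ∈ range b,
    x ^ s * y ^ (b - 1 - t) * ∑ r ∈ range (a + t - s), x ^ r * y ^ (a + t - s - 1 - r)

theorem pow_mul_pow_sub_pow_mul_pow_eq (x y : R) {a b s t : ℕ} (hs : s < a) (ht : t < b) :
    x ^ (a + t) * y ^ (b - 1 - t) - x ^ s * y ^ (a + b - 1 - s) =
      (x - y) * (x ^ s * y ^ (b - 1 - t) *
        ∑ r ∈ range (a + t - s), x ^ r * y ^ (a + t - s - 1 - r)) := by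
  generalize he : a + t - s = e
  rw [mul_comm (x - y), mul_assoc, geom_sum₂_mul,
    show a + t = s + e by omega, show a + b - 1 - s = b - 1 - t + e by omega]
  ring

theorem amgm_identity (x y : R) (a b : ℕ) :
    a * x ^ (a + b) + b * y ^ (a + b) =
      (a + b) * x ^ a * y ^ b + (x - y) ^ 2 * amgmQuotient a b x y := by
  have hx : ∑ s ∈ range a, ∑ t ∈ range b, x ^ (a + t) * y ^ (b - 1 - t) =
      a * x ^ a * ∑ t ∈ range b, x ^ t * y ^ (b - 1 - t) := by
    simp [pow_add, mul_sum, mul_assoc]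
  have hy : ∑ s ∈ range a, ∑ t ∈ range b, x ^ s * y ^ (a + b - 1 - s) =
      b * y ^ b * ∑ s ∈ range a, x ^ s * y ^ (a - 1 - s) := by
    rw [sum_comm]
    simp only [sum_const, card_range, nsmul_eq_mul, mul_sum, mul_assoc]
    refine sum_congr rfl fun s hs => ?_
    rw [show a + b - 1 - s = b + (a - 1 - s) by have := mem_range.1 hs; omega, pow_add]
    ring
  have hQ : (x - y) * amgmQuotient a b x y =
      a * x ^ a * ∑ t ∈ range b, x ^ t * y ^ (b - 1 - t) -
        b * y ^ b * ∑ s ∈ range a, x ^ s * y ^ (a - 1 - s) := by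
    rw [← hx, ← hy, ← sum_sub_distrib, amgmQuotient, mul_sum]
    refine sum_congr rfl fun s hs => ?_
    rw [← sum_sub_distrib, mul_sum]
    refine sum_congr rfl fun t ht => ?_
    rw [pow_mul_pow_sub_pow_mul_pow_eq x y (mem_range.1 hs) (mem_range.1 ht)]
  linear_combination (y - x) * hQ - (a * x ^ a) * geom_sum₂_mul x y b +
    (b * y ^ b) * geom_sum₂_mul x y a

theorem amgmQuotient_mem {S : Type*} [SetLike S R] [SubsemiringClass S R] {s : S} {x y : R}
    (hx : x ∈ s) (hy : y ∈ s) (a b : ℕ) : amgmQuotient a b x y ∈ s :=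
  sum_mem fun _ _ => sum_mem fun _ _ => mul_mem (mul_mem (pow_mem hx _) (pow_mem hy _))
    (sum_mem fun _ _ => mul_mem (pow_mem hx _) (pow_mem hy _))

theorem isHomogeneous_amgmQuotient {σ : Type*} (i j : σ) (a b : ℕ) :
    (amgmQuotient a b (X i) (X j) : MvPolynomial σ R).IsHomogeneous (a + b - 2) := by
  refine IsHomogeneous.sum _ _ _ fun s hs => IsHomogeneous.sum _ _ _ fun t ht => ?_
  have hr : (∑ r ∈ range (a + t - s), X i ^ r * X j ^ (a + t - s - 1 - r) :
      MvPolynomial σ R).IsHomogeneous (a + t - s - 1) :=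
    IsHomogeneous.sum _ _ _ fun r hr => by
      convert (isHomogeneous_X_pow i r).mul (isHomogeneous_X_pow j _) using 1
      have := mem_range.1 hr; omega
  convert ((isHomogeneous_X_pow i s).mul (isHomogeneous_X_pow j _)).mul hr using 1
  have := mem_range.1 hs; have := mem_range.1 ht; omega

end AMGM

namespace MvPolynomial

variable (σ R : Type*) [CommSemiring R] [PartialOrder R] [IsOrderedRing R]

def nonnegCoeffs : Subsemiring (MvPolynomial σ R) where
  carrier := {p | ∀ m, 0 ≤ p.coeff m}
  mul_mem' {p q} hp hq m := by
    classical
    rw [coeff_mul]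
    exact sum_nonneg fun x _ => mul_nonneg (hp _) (hq _)
  one_mem' m := by
    classical
    rw [coeff_one]
    split_ifs <;> simp
  add_mem' hp hq m := by
    rw [coeff_add]
    exact add_nonneg (hp m) (hq m)
  zero_mem' m := by simp

variable {σ R}

theorem mem_nonnegCoeffs {p : MvPolynomial σ R} : p ∈ nonnegCoeffs σ R ↔ ∀ m, 0 ≤ p.coeff m :=
  Iff.rfl

theorem monomial_mem_nonnegCoeffs (s : σ →₀ ℕ) {c : R} (hc : 0 ≤ c) :
    monomial s c ∈ nonnegCoeffs σ R := fun m => by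
  classical
  rw [coeff_monomial]
  split_ifs <;> simp [hc]

theorem C_mem_nonnegCoeffs {c : R} (hc : 0 ≤ c) : C c ∈ nonnegCoeffs σ R :=
  monomial_mem_nonnegCoeffs 0 hc

theorem X_mem_nonnegCoeffs (i : σ) : X i ∈ nonnegCoeffs σ R :=
  monomial_mem_nonnegCoeffs _ zero_le_one

end MvPolynomial

theorem monomial_add_single_add_single_eq {σ R : Type*} [Field R] (r : σ →₀ ℕ) (i j : σ)
    {a b : ℕ} (hab : (a + b : R) ≠ 0) :
    monomial (r + Finsupp.single i a + Finsupp.single j b) (1 : R) =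
      C ((a : R) / (a + b)) * monomial (r + Finsupp.single i (a + b)) 1 +
        C ((b : R) / (a + b)) * monomial (r + Finsupp.single j (a + b)) 1 +
        -(C ((a + b : R)⁻¹) * amgmQuotient a b (X i) (X j) * monomial r 1) * (X i - X j) ^ 2 := by
  have hinv : ((a : MvPolynomial σ R) + (b : MvPolynomial σ R)) * C ((a + b : R)⁻¹) = 1 := by
    rw [← map_natCast C, ← map_natCast C, ← map_add, ← map_mul, mul_inv_cancel₀ hab, map_one]
  simp only [monomial_add_single, div_eq_mul_inv, map_mul, map_natCast]
  linear_combination -(C ((a + b : R)⁻¹) * monomial r 1) *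
      amgm_identity (X i : MvPolynomial σ R) (X j) a b -
    (monomial r 1 * X i ^ a * X j ^ b) * hinv

section OrderedRing

variable {σ R : Type*} [Fintype σ] [LinearOrder σ] [CommRing R] [PartialOrder R]
  [IsOrderedRing R] {N : ℕ}

def HasGradientDecomposition (N : ℕ) (f : MvPolynomial σ R) : Prop :=
  ∃ (p : σ → R) (d : σ → σ → MvPolynomial σ R),
    (∀ i, 0 ≤ p i) ∧ ∑ i, p i = 1 ∧ (∀ i j, (d i j).IsHomogeneous (N - 2)) ∧
      (∀ i j, -d i j ∈ nonnegCoeffs σ R) ∧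
      f = ∑ i, C (p i) * X i ^ N + ∑ i, ∑ j, if i < j then d i j * (X i - X j) ^ 2 else 0

theorem hasGradientDecomposition_X_pow (N : ℕ) (i : σ) :
    HasGradientDecomposition N (X i ^ N : MvPolynomial σ R) :=
  ⟨Pi.single i 1, 0, fun j => by simp [Pi.single_apply, apply_ite], by simp,
    fun _ _ => isHomogeneous_zero .., fun _ _ => by simp [zero_mem], by
      simp [Pi.single_apply, apply_ite]⟩

theorem HasGradientDecomposition.convex_combination {f g : MvPolynomial σ R}
    (hf : HasGradientDecomposition N f) (hg : HasGradientDecomposition N g) {a b : R}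
    (ha : 0 ≤ a) (hb : 0 ≤ b) (hab : a + b = 1) :
    HasGradientDecomposition N (C a * f + C b * g) := by
  obtain ⟨p, d, hp, hp1, hd, hd', rfl⟩ := hf
  obtain ⟨q, e, hq, hq1, he, he', rfl⟩ := hg
  refine ⟨a • p + b • q, fun i j => C a * d i j + C b * e i j,
    fun i => add_nonneg (mul_nonneg ha (hp i)) (mul_nonneg hb (hq i)), ?_,
    fun i j => ((hd i j).C_mul a).add ((he i j).C_mul b), fun i j => ?_, ?_⟩
  · simp [sum_add_distrib, ← mul_sum, hp1, hq1, hab]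
  · rw [neg_add, ← mul_neg, ← mul_neg]
    exact add_mem (mul_mem (C_mem_nonnegCoeffs ha) (hd' i j))
      (mul_mem (C_mem_nonnegCoeffs hb) (he' i j))
  · simp only [mul_add, mul_sum, Pi.add_apply, Pi.smul_apply, smul_eq_mul, map_add, map_mul,
      add_mul, sum_add_distrib]
    rw [add_add_add_comm]
    congr 1
    · simp only [mul_assoc]
    · rw [← sum_add_distrib]
      refine sum_congr rfl fun k _ => ?_
      rw [← sum_add_distrib]
      refine sum_congr rfl fun l _ => ?_
      split_ifs <;> ring

theorem HasGradientDecomposition.add_mul_sq_sub {f : MvPolynomial σ R}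
    (hf : HasGradientDecomposition N f) {i j : σ} (hij : i < j) {E : MvPolynomial σ R}
    (hE : E.IsHomogeneous (N - 2)) (hE' : -E ∈ nonnegCoeffs σ R) :
    HasGradientDecomposition N (f + E * (X i - X j) ^ 2) := by
  obtain ⟨p, d, hp, hp1, hd, hd', rfl⟩ := hf
  let D : σ → σ → MvPolynomial σ R := fun k l => if k = i ∧ l = j then E else 0
  refine ⟨p, d + D, hp, hp1, fun k l => ?_, fun k l => ?_, ?_⟩
  · simp only [Pi.add_apply, D]
    split_ifs
    · exact (hd k l).add hE
    · simpa using hd k l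
  · simp only [Pi.add_apply, D, neg_add]
    split_ifs
    · exact add_mem (hd' k l) hE'
    · simpa using hd' k l
  · have hD : ∀ k l, (if k < l then D k l * (X k - X l) ^ 2 else 0) =
        if k = i ∧ l = j then E * (X i - X j) ^ 2 else 0 := by
      intro k l
      by_cases hk : k = i <;> by_cases hl : l = j <;> simp [D, hk, hl, hij]
    simp only [Pi.add_apply, add_mul, ite_add_zero, sum_add_distrib, hD]
    simp [ite_and, add_assoc]

end OrderedRing

section OrderedField

variable {σ R : Type*} [Fintype σ] [LinearOrder σ] [Field R] [LinearOrder R]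
  [IsStrictOrderedRing R]

theorem HasGradientDecomposition.monomial_add_single_add_single {r : σ →₀ ℕ} {i j : σ}
    (hij : i < j) {a b : ℕ} (ha : a ≠ 0) (hb : b ≠ 0)
    (hi : HasGradientDecomposition (r.degree + a + b)
      (monomial (r + Finsupp.single i (a + b)) (1 : R)))
    (hj : HasGradientDecomposition (r.degree + a + b)
      (monomial (r + Finsupp.single j (a + b)) (1 : R))) :
    HasGradientDecomposition (r.degree + a + b)
      (monomial (r + Finsupp.single i a + Finsupp.single j b) (1 : R)) := by
  have hab : (0 : R) < a + b := by positivity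
  rw [monomial_add_single_add_single_eq r i j hab.ne']
  refine (hi.convex_combination hj (by positivity) (by positivity) ?_).add_mul_sq_sub hij ?_ ?_
  · rw [← add_div, div_self hab.ne']
  · convert (((isHomogeneous_C σ _).mul (isHomogeneous_amgmQuotient i j a b)).mul
      (isHomogeneous_monomial (1 : R) rfl)).neg using 1
    omega
  · rw [neg_neg]
    exact mul_mem (mul_mem (C_mem_nonnegCoeffs (by positivity))
      (amgmQuotient_mem (X_mem_nonnegCoeffs i) (X_mem_nonnegCoeffs j) a b))
      (monomial_mem_nonnegCoeffs r zero_le_one)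

theorem hasGradientDecomposition_monomial {n : σ →₀ ℕ} (hn : n ≠ 0) :
    HasGradientDecomposition n.degree (monomial n (1 : R)) := by
  induction hc : n.support.card using Nat.strong_induction_on generalizing n with
  | _ c ih =>
  have hpos : 0 < c := hc ▸ (Finsupp.support_nonempty_iff.2 hn).card_pos
  rcases (by omega : c = 1 ∨ 1 < c) with rfl | hc1
  · obtain ⟨i, b, -, rfl⟩ := Finsupp.card_support_eq_one'.1 hc
    rw [Finsupp.degree_single, ← X_pow_eq_monomial]
    exact hasGradientDecomposition_X_pow b i
  have hc1' : 1 < n.support.card := hc ▸ hc1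
  set i := n.support.min' (Finset.card_pos.1 (by omega))
  set j := n.support.max' (Finset.card_pos.1 (by omega))
  have hij : i < j := Finset.min'_lt_max'_of_card _ hc1'
  have hi : i ∈ n.support := Finset.min'_mem _ _
  have hj : j ∈ n.support := Finset.max'_mem _ _
  set r := (n.erase i).erase j
  have hn_eq : n = r + Finsupp.single i (n i) + Finsupp.single j (n j) := by
    rw [add_right_comm, ← Finsupp.erase_ne hij.ne', Finsupp.erase_add_single,
      Finsupp.erase_add_single]
  have hr : r.support.card = c - 2 := by
    rw [Finsupp.support_erase, Finsupp.support_erase,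
      Finset.card_erase_of_mem (Finset.mem_erase.2 ⟨hij.ne', hj⟩), Finset.card_erase_of_mem hi, hc]
    omega
  have hmerged : ∀ l, HasGradientDecomposition (r.degree + n i + n j)
      (monomial (r + Finsupp.single l (n i + n j)) (1 : R)) := fun l => by
    have hcard : (r + Finsupp.single l (n i + n j)).support.card < c :=
      calc _ ≤ r.support.card + (Finsupp.single l (n i + n j)).support.card :=
            (Finset.card_le_card Finsupp.support_add).trans (Finset.card_union_le _ _)
        _ ≤ r.support.card + 1 := by grw [Finsupp.support_single_subset, Finset.card_singleton]
        _ < c := by omega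
    have hne : r + Finsupp.single l (n i + n j) ≠ 0 := fun h => by
      simpa [Finsupp.mem_support_iff.1 hi] using congrArg (· l) h
    simpa [add_assoc] using ih _ hcard hne rfl
  rw [hn_eq, map_add, map_add, Finsupp.degree_single, Finsupp.degree_single]
  exact (hmerged i).monomial_add_single_add_single hij (Finsupp.mem_support_iff.1 hi)
    (Finsupp.mem_support_iff.1 hj) (hmerged j)

end OrderedField

theorem monomial_gradient_decomposition_general (N k : ℕ) (hN : 2 ≤ N) (n : Fin k → ℕ)
    (hsum : ∑ i, n i = N) :
    ∃ (p : Fin k → ℝ) (d : Fin k → Fin k → MvPolynomial (Fin k) ℝ),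
      (∀ i, 0 ≤ p i) ∧ (∑ i, p i = 1) ∧
      (∀ i j, (d i j).totalDegree ≤ N - 2) ∧
      (∀ i j m, (d i j).coeff m ≤ 0) ∧
      (∀ u : Fin k → ℝ,
        ∏ i, u i ^ n i
          = ∑ i, p i * u i ^ N
            + ∑ i, ∑ j, if i < j then
                MvPolynomial.eval u (d i j) * (u i - u j) ^ 2 else 0) := by
  set e := Finsupp.equivFunOnFinite.symm n
  have he : e.degree = N := by simpa [Finsupp.degree_eq_sum, e] using hsum
  have he0 : e ≠ 0 := fun h => by simp [h] at he; omega
  obtain ⟨p, d, hp, hp1, hd, hd', h⟩ := he ▸ hasGradientDecomposition_monomial (R := ℝ) he0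
  refine ⟨p, d, hp, hp1, fun i j => (hd i j).totalDegree_le, fun i j m => ?_, fun u => ?_⟩
  · simpa using mem_nonnegCoeffs.1 (hd' i j) m
  · simpa [eval_monomial, Finsupp.prod_fintype, apply_ite, e] using congrArg (eval u) h

/-- Every monomial `u_1^{n_1} ⋯ u_k^{n_k}` of total degree `N ≥ 2` (all `n_i ≥ 1`) is a
convex combination of the pure powers `u_i^N` plus a sum of gradient-squared terms whose
polynomial coefficients have degree `N−2` and nonpositive coefficients. -/
theorem monomial_gradient_decomposition (N k : ℕ) (hN : 2 ≤ N) (n : Fin k → ℕ)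
    (hn : ∀ i, 1 ≤ n i) (hsum : ∑ i, n i = N) :
    ∃ (p : Fin k → ℝ) (d : Fin k → Fin k → MvPolynomial (Fin k) ℝ),
      (∀ i, 0 ≤ p i) ∧ (∑ i, p i = 1) ∧
      (∀ i j, (d i j).totalDegree ≤ N - 2) ∧
      (∀ i j m, (d i j).coeff m ≤ 0) ∧
      (∀ u : Fin k → ℝ,
        ∏ i, u i ^ n i
          = ∑ i, p i * u i ^ N
            + ∑ i, ∑ j, if i < j then
                MvPolynomial.eval u (d i j) * (u i - u j) ^ 2 else 0) :=
  monomial_gradient_decomposition_general N k hN n hsum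
end

section
/- In the monomial decomposition M(u) = Σ_i p_i u_i^N + Σ_{i<j} d_{i,j}(u)(u_i − u_j)², there exists an absolute constant c such that for any 0 < U ≤ 1, sup over |u_i| ≤ U of |d_{i,j}(u)| ≤ c · U^{N−2} · N³. -/
open MvPolynomial Finset

def Ec (a b r : ℕ) : ℕ := if r < b then a * (r+1) else b * (a + b - 1 - r)

noncomputable def pairPoly (a b : ℕ) {σ : Type*} (i j : σ) : MvPolynomial σ ℝ :=
  ∑ r ∈ Finset.range (a+b-1),
    MvPolynomial.C (Ec a b r : ℝ) * MvPolynomial.X i ^ (a+b-2-r) * MvPolynomial.X j ^ r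

lemma eval_pairPoly {σ : Type*} (a b : ℕ) (i j : σ) (u : σ → ℝ) :
    eval u (pairPoly a b i j)
      = ∑ r ∈ Finset.range (a+b-1), (Ec a b r : ℝ) * u i ^ (a+b-2-r) * u j ^ r := by
  simp [pairPoly]

def NNC {σ : Type*} (p : MvPolynomial σ ℝ) : Prop := ∀ m, 0 ≤ coeff m p
lemma NNC.mul {p q : MvPolynomial σ ℝ} (hp : NNC p) (hq : NNC q) : NNC (p * q) := by
  classical
  intro m
  rw [coeff_mul]
  exact Finset.sum_nonneg fun c _ => mul_nonneg (hp _) (hq _)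

lemma NNC.C {c : ℝ} (hc : 0 ≤ c) : NNC (MvPolynomial.C (σ := σ) c) := by
  classical
  intro m
  rw [coeff_C]
  split <;> simp [hc]

lemma NNC.X (i : σ) : NNC (MvPolynomial.X (R := ℝ) i) := by
  classical
  intro m
  rw [coeff_X']
  split <;> norm_num

lemma NNC.pow {p : MvPolynomial σ ℝ} (hp : NNC p) (n : ℕ) : NNC (p ^ n) := by
  induction n with
  | zero => simpa using NNC.C (σ := σ) zero_le_one
  | succ n ih => rw [pow_succ]; exact ih.mul hp

lemma NNC.sum {ι : Type*} (s : Finset ι) (f : ι → MvPolynomial σ ℝ)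
    (h : ∀ i ∈ s, NNC (f i)) : NNC (∑ i ∈ s, f i) := by
  intro m
  rw [coeff_sum]
  exact Finset.sum_nonneg fun i hi => h i hi m

lemma NNC.rename {τ : Type*} {f : σ → τ} (hf : Function.Injective f)
    {p : MvPolynomial σ ℝ} (hp : NNC p) : NNC (rename f p) := by
  intro m
  by_cases h : coeff m (MvPolynomial.rename f p) = 0
  · rw [h]
  · obtain ⟨u, rfl, -⟩ := coeff_rename_ne_zero f p m h
    rw [coeff_rename_mapDomain f hf]
    exact hp u

lemma NNC.eval_one_eq {k : ℕ} (p : MvPolynomial (Fin k) ℝ) :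
    eval (fun _ => (1:ℝ)) p = ∑ m ∈ p.support, coeff m p := by
  rw [eval_eq']
  simp

/-- main eval bound -/
lemma NNC.eval_abs_le {k D : ℕ} {p : MvPolynomial (Fin k) ℝ} (hp : NNC p)
    (hhom : p.IsHomogeneous D) {U : ℝ} (hU : 0 ≤ U) (u : Fin k → ℝ)
    (hu : ∀ i, |u i| ≤ U) :
    |eval u p| ≤ eval (fun _ => (1:ℝ)) p * U ^ D := by
  rw [eval_eq', NNC.eval_one_eq, Finset.sum_mul]
  refine (Finset.abs_sum_le_sum_abs _ _).trans (Finset.sum_le_sum fun m hm => ?_)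
  rw [abs_mul, abs_of_nonneg (hp m)]
  gcongr
  · exact hp m
  have hdeg : ∑ i, m i = D := by
    have h1 := hhom (Finsupp.mem_support_iff.mp hm)
    rw [← h1]
    simp [Finsupp.weight_apply, Finsupp.sum]
    exact (Finset.sum_subset (Finset.subset_univ _) (fun i _ hi => by
      simpa using Finsupp.notMem_support_iff.mp hi)).symm
  calc |∏ i, u i ^ m i| = ∏ i, |u i| ^ m i := by
        rw [abs_prod]
        exact Finset.prod_congr rfl fun i _ => (abs_pow _ _)
    _ ≤ ∏ i, U ^ m i := by
        apply Finset.prod_le_prod (fun i _ => by positivity)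
          (fun i _ => pow_le_pow_left₀ (abs_nonneg _) (hu i) _)
    _ = U ^ D := by rw [Finset.prod_pow_eq_pow_sum]; rw [hdeg]

lemma pairPoly_NNC {σ : Type*} (a b : ℕ) (i j : σ) : NNC (pairPoly a b i j) :=
  NNC.sum _ _ fun r _ =>
    ((NNC.C (by positivity)).mul ((NNC.X i).pow _)).mul ((NNC.X j).pow _)

lemma pairPoly_hom {σ : Type*} (a b : ℕ) (hab : 2 ≤ a + b) (i j : σ) :
    (pairPoly a b i j).IsHomogeneous (a + b - 2) := by
  apply IsHomogeneous.sum
  intro r hr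
  rw [Finset.mem_range] at hr
  have H := ((isHomogeneous_C σ ((Ec a b r : ℕ):ℝ)).mul
    (isHomogeneous_X_pow i (a+b-2-r))).mul (isHomogeneous_X_pow j r)
  simpa [show (a+b-2-r) + r = a+b-2 by omega] using H

lemma pairPoly_eval_one_le {σ : Type*} (a b : ℕ) (i j : σ) :
    eval (fun _ => (1:ℝ)) (pairPoly a b i j) ≤ ((a+b:ℕ):ℝ)^3 := by
  rw [eval_pairPoly]
  simp only [one_pow, mul_one]
  have h1 : ∑ r ∈ Finset.range (a+b-1), (Ec a b r : ℝ)
      = ((∑ r ∈ Finset.range (a+b-1), Ec a b r : ℕ) : ℝ) := by push_cast; ring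
  rw [h1]
  have h2 : (∑ r ∈ Finset.range (a+b-1), Ec a b r) ≤ (a+b)^3 := by
    calc (∑ r ∈ Finset.range (a+b-1), Ec a b r)
        ≤ ∑ _r ∈ Finset.range (a+b-1), (a+b)*(a+b) := by
          apply Finset.sum_le_sum
          intro r hr
          rw [Finset.mem_range] at hr
          unfold Ec
          split
          · exact Nat.mul_le_mul (by omega) (by omega)
          · exact Nat.mul_le_mul (by omega) (by omega)
      _ = (a+b-1) * ((a+b)*(a+b)) := by rw [Finset.sum_const, Finset.card_range]; ring
      _ ≤ (a+b) * ((a+b)*(a+b)) := Nat.mul_le_mul_right _ (by omega)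
      _ = (a+b)^3 := by ring
  exact_mod_cast h2

lemma pair_ident (a b N : ℕ) (ha : 1 ≤ a) (hb : 1 ≤ b) (hN : a + b = N) (x y : ℝ) :
    (a:ℝ) * x^N + b * y^N - N * (x^a * y^b)
      = (x - y)^2 * ∑ r ∈ Finset.range (N-1), (Ec a b r : ℝ) * x^(N-2-r) * y^r := by
  obtain ⟨M, rfl⟩ : ∃ M, N = M + 2 := ⟨N - 2, by omega⟩
  have hM1 : M + 2 - 1 = M + 1 := by omega
  have hM2 : M + 2 - 2 = M := by omega
  rw [hM1, hM2]
  set S : ℝ := ∑ r ∈ Finset.range (M+1), (Ec a b r : ℝ) * x^(M-r) * y^r with hS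
  set e : ℕ → ℝ := fun j => if j < b then (a:ℝ) else -(b:ℝ) with he
  have key1 : (x - y) * S = ∑ j ∈ Finset.range (M+2), e j * (x^(M+1-j) * y^j) := by
    have hxS : x * S = ∑ j ∈ Finset.range (M+2), (Ec a b j : ℝ) * (x^(M+1-j) * y^j) := by
      rw [hS, Finset.mul_sum]
      have hz : (Ec a b (M+1) : ℝ) = 0 := by
        have h0 : a + b - 1 - (M+1) = 0 := by omega
        unfold Ec
        rw [if_neg (by omega), h0, Nat.mul_zero, Nat.cast_zero]
      conv_rhs => rw [Finset.sum_range_succ]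
      rw [hz, zero_mul, add_zero]
      apply Finset.sum_congr rfl
      intro r hr
      rw [Finset.mem_range] at hr
      rw [show M + 1 - r = (M - r) + 1 by omega, pow_succ']
      ring
    have hyS : y * S = ∑ j ∈ Finset.range (M+2),
        (if j = 0 then 0 else (Ec a b (j-1) : ℝ)) * (x^(M+1-j) * y^j) := by
      rw [Finset.sum_range_succ']
      norm_num
      rw [hS, Finset.mul_sum]
      apply Finset.sum_congr rfl
      intro r hr
      rw [Finset.mem_range] at hr
      rw [show M + 1 - (r + 1) = M - r by omega]
      ring
    rw [sub_mul, hxS, hyS, ← Finset.sum_sub_distrib]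
    apply Finset.sum_congr rfl
    intro j hj
    rw [Finset.mem_range] at hj
    rw [← sub_mul]
    congr 1
    rcases Nat.eq_zero_or_pos j with h0 | h0
    · subst h0
      norm_num [he]
      have h1 : Ec a b 0 = a := by
        unfold Ec; rw [if_pos (show 0 < b by omega)]; ring
      rw [if_pos (show 0 < b by omega), h1]
    · rw [if_neg (by omega : ¬ j = 0)]
      rcases lt_or_ge j b with hjb | hjb
      · have e1 : Ec a b j = a * (j+1) := by unfold Ec; rw [if_pos hjb]
        have e2 : Ec a b (j-1) = a * j := by
          unfold Ec; rw [if_pos (by omega)]; congr 1; omega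
        rw [e1, e2, he]
        simp only [if_pos hjb]
        push_cast
        ring
      · have e1 : Ec a b j = b * (a + b - 1 - j) := by
          unfold Ec; rw [if_neg (by omega)]
        have e2 : Ec a b (j-1) = b * (a + b - 1 - j) + b := by
          unfold Ec
          rcases eq_or_lt_of_le hjb with hbj | hbj
          · rw [if_pos (by omega)]
            obtain ⟨a', rfl⟩ : ∃ a', a = a' + 1 := ⟨a - 1, by omega⟩
            rw [show j - 1 + 1 = j by omega, ← hbj,
              show a' + 1 + b - 1 - b = a' by omega]
            ring
          · rw [if_neg (by omega)]
            have h3 : a + b - 1 - (j - 1) = (a + b - 1 - j) + 1 := by omega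
            rw [h3]
            ring
        rw [e1, e2, he]
        simp only [if_neg (by omega : ¬ j < b)]
        push_cast
        ring
  have key2 : ∑ j ∈ Finset.range (M+2), e j * (x^(M+1-j) * y^j)
      = (∑ j ∈ Finset.range b, (a:ℝ) * (x^(M+1-j) * y^j))
        + ∑ j ∈ Finset.range a, -((b:ℝ) * (x^(a-1-j) * y^(b+j))) := by
    conv_lhs => rw [Finset.range_eq_Ico]
    rw [← Finset.sum_Ico_consecutive _ (Nat.zero_le b) (by omega : b ≤ M + 2)]
    congr 1
    · rw [← Finset.range_eq_Ico]
      apply Finset.sum_congr rfl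
      intro j hj
      rw [Finset.mem_range] at hj
      rw [he]; simp only [if_pos hj]
    · rw [Finset.sum_Ico_eq_sum_range, show M + 2 - b = a by omega]
      apply Finset.sum_congr rfl
      intro j hj
      rw [Finset.mem_range] at hj
      rw [he]
      simp only [if_neg (by omega : ¬ b + j < b)]
      rw [show M + 1 - (b + j) = a - 1 - j by omega]
      ring
  have key3 : (x - y) * ((∑ j ∈ Finset.range b, (a:ℝ) * (x^(M+1-j) * y^j))
        + ∑ j ∈ Finset.range a, -((b:ℝ) * (x^(a-1-j) * y^(b+j))))
      = (a:ℝ) * x^(M+2) + b * y^(M+2) - ((M:ℝ)+2) * (x^a * y^b) := by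
    have t1 : (x - y) * ∑ j ∈ Finset.range b, (a:ℝ) * (x^(M+1-j) * y^j)
        = (a:ℝ) * (x^(M+2) - x^a * y^b) := by
      have hc : ∀ j ∈ Finset.range b, (x - y) * ((a:ℝ) * (x^(M+1-j) * y^j))
          = (a:ℝ) * ((x^(M+2-j) * y^j) - (x^(M+2-(j+1)) * y^(j+1))) := by
        intro j hj
        rw [Finset.mem_range] at hj
        rw [show M + 2 - (j+1) = M + 1 - j by omega,
          show M + 2 - j = (M + 1 - j) + 1 by omega, pow_succ']
        ring
      rw [Finset.mul_sum, Finset.sum_congr rfl hc, ← Finset.mul_sum,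
        Finset.sum_range_sub' (fun j => x^(M+2-j) * y^j)]
      simp only [Nat.sub_zero, pow_zero, mul_one]
      rw [show M + 2 - b = a by omega]
    have t2 : (x - y) * ∑ j ∈ Finset.range a, ((b:ℝ) * (x^(a-1-j) * y^(b+j)))
        = (b:ℝ) * (x^a * y^b - y^(M+2)) := by
      have hc : ∀ j ∈ Finset.range a, (x - y) * ((b:ℝ) * (x^(a-1-j) * y^(b+j)))
          = (b:ℝ) * ((x^(a-j) * y^(b+j)) - (x^(a-(j+1)) * y^(b+(j+1)))) := by
        intro j hj
        rw [Finset.mem_range] at hj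
        rw [show a - (j+1) = a - 1 - j by omega,
          show a - j = (a - 1 - j) + 1 by omega,
          show b + (j+1) = (b + j) + 1 by omega, pow_succ', pow_succ]
        ring
      rw [Finset.mul_sum, Finset.sum_congr rfl hc, ← Finset.mul_sum,
        Finset.sum_range_sub' (fun j => x^(a-j) * y^(b+j))]
      simp only [Nat.sub_zero, pow_zero, one_mul, add_zero, Nat.sub_self]
      rw [show b + a = M + 2 by omega]
    rw [mul_add, t1, Finset.sum_neg_distrib, mul_neg, t2]
    have hab : ((M:ℝ) + 2) = (a : ℝ) + b := by exact_mod_cast hN.symm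
    linear_combination (x^a * y^b) * hab
  have hcast : ((M+2:ℕ):ℝ) = (M:ℝ)+2 := by push_cast; ring
  rw [hcast]
  calc (a:ℝ) * x^(M+2) + b * y^(M+2) - ((M:ℝ)+2) * (x^a * y^b)
      = (x - y) * ((x - y) * S) := by rw [key1, key2, key3]
    _ = (x - y)^2 * S := by ring

lemma NNC.eval_one_nonneg {k : ℕ} {p : MvPolynomial (Fin k) ℝ} (hp : NNC p) :
    0 ≤ eval (fun _ => (1:ℝ)) p := by
  rw [NNC.eval_one_eq]
  exact Finset.sum_nonneg fun m _ => hp m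

lemma main_ind (k : ℕ) : ∀ (n : Fin (k+1) → ℕ), (∀ i, 1 ≤ n i) →
    ∃ d : Fin (k+1) → Fin (k+1) → MvPolynomial (Fin (k+1)) ℝ,
      (∀ i j, NNC (d i j)) ∧
      (∀ i j, (d i j).IsHomogeneous ((∑ i, n i) - 2)) ∧
      ((∑ i, n i) < 2 → ∀ i j, d i j = 0) ∧
      (∀ i j, eval (fun _ => (1:ℝ)) (d i j) ≤ (((∑ i, n i : ℕ)):ℝ)^3) ∧
      (∀ u : Fin (k+1) → ℝ,
        ∏ i, u i ^ n i
          = (∑ i, ((n i : ℝ)/((∑ i, n i : ℕ):ℝ)) * u i ^ (∑ i, n i))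
            + ∑ i, ∑ j, if i < j then -(eval u (d i j)) * (u i - u j)^2 else 0) := by
  induction k with
  | zero =>
    intro n hn
    refine ⟨fun _ _ => 0, ?_, ?_, ?_, ?_, ?_⟩
    · intro i j m; rw [coeff_zero]
    · intro i j; exact isHomogeneous_zero _ _ _
    · intro _ i j; rfl
    · intro i j; rw [map_zero]; positivity
    · intro u
      have h0 : (n 0 : ℝ) ≠ 0 := Nat.cast_ne_zero.mpr (by have := hn 0; omega)
      simp only [Fin.prod_univ_succ, Fin.sum_univ_succ, Fin.prod_univ_zero,
        Fin.sum_univ_zero, map_zero, neg_zero, zero_mul, ite_self,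
        Finset.sum_const_zero, add_zero, mul_one, Nat.add_zero]
      rw [div_self h0, one_mul]
  | succ k ih =>
    intro n hn
    classical
    obtain ⟨d', hN', hH', hZ', hM', hI'⟩ := ih (fun i => n i.castSucc) (fun i => hn _)
    set lst : Fin (k+2) := Fin.last (k+1) with hlst
    set b : ℕ := n lst with hbdef
    set A : ℕ := ∑ i : Fin (k+1), n i.castSucc with hAdef
    have hb1 : 1 ≤ b := hn _
    have hA1 : 1 ≤ A :=
      le_trans (hn _) (Finset.single_le_sum
        (f := fun i : Fin (k+1) => n i.castSucc) (fun _ _ => Nat.zero_le _)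
        (Finset.mem_univ (0 : Fin (k+1))))
    have hNsum : ∑ i, n i = A + b := by rw [Fin.sum_univ_castSucc]
    have hne : ∀ i' : Fin (k+1), i'.castSucc ≠ lst := fun i' => (Fin.castSucc_lt_last i').ne
    have hA0 : ((A:ℕ):ℝ) ≠ 0 := Nat.cast_ne_zero.mpr (by omega)
    have hNR0 : (((A+b:ℕ)):ℝ) ≠ 0 := Nat.cast_ne_zero.mpr (by omega)
    have hnle : ∀ i' : Fin (k+1), n i'.castSucc ≤ A := fun i' =>
      Finset.single_le_sum (f := fun i : Fin (k+1) => n i.castSucc)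
        (fun _ _ => Nat.zero_le _) (Finset.mem_univ i')
    set dd : Fin (k+2) → Fin (k+2) → MvPolynomial (Fin (k+2)) ℝ := fun i j =>
      if hj : j = lst then
        (if i = lst then 0
         else MvPolynomial.C ((n i : ℝ) / ((A:ℝ) * ((A+b:ℕ):ℝ))) * pairPoly A b i lst)
      else if hi : i = lst then 0
      else MvPolynomial.rename Fin.castSucc (d' (i.castPred hi) (j.castPred hj))
           * MvPolynomial.X lst ^ b with hdd
    have hdd1 : ∀ i' : Fin (k+1), dd i'.castSucc lst
        = MvPolynomial.C ((n i'.castSucc : ℝ) / ((A:ℝ) * ((A+b:ℕ):ℝ)))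
          * pairPoly A b i'.castSucc lst := by
      intro i'
      rw [hdd]
      simp [hne i']
    have hdd2 : ∀ i' j' : Fin (k+1), dd i'.castSucc j'.castSucc
        = MvPolynomial.rename Fin.castSucc (d' i' j') * MvPolynomial.X lst ^ b := by
      intro i' j'
      rw [hdd]
      simp [hne i', hne j', Fin.castPred_castSucc]
    refine ⟨dd, ?_, ?_, ?_, ?_, ?_⟩
    · -- NNC
      intro i j
      rw [hdd]
      dsimp only
      split_ifs with h1 h2 h3
      · intro m; rw [coeff_zero]
      · exact (NNC.C (by positivity)).mul (pairPoly_NNC A b i lst)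
      · intro m; rw [coeff_zero]
      · exact ((hN' _ _).rename (Fin.castSucc_injective _)).mul ((NNC.X lst).pow b)
    · -- homogeneous
      intro i j
      rw [hNsum, hdd]
      dsimp only
      split_ifs with h1 h2 h3
      · exact isHomogeneous_zero _ _ _
      · exact (pairPoly_hom A b (by omega) i lst).C_mul _
      · exact isHomogeneous_zero _ _ _
      · rcases lt_or_ge A 2 with hA2 | hA2
        · rw [hZ' hA2]
          rw [map_zero, zero_mul]
          exact isHomogeneous_zero _ _ _
        · have H := (IsHomogeneous.rename_isHomogeneous (f := Fin.castSucc)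
              (hH' (i.castPred h3) (j.castPred h1))).mul
            (isHomogeneous_X_pow (R := ℝ) lst b)
          have he : A + b - 2 = (A - 2) + b := by omega
          rw [he]
          exact H
    · -- zero case vacuous
      intro h
      rw [hNsum] at h
      omega
    · -- mass
      intro i j
      rw [hNsum, hdd]
      dsimp only
      split_ifs with h1 h2 h3
      · rw [map_zero]; positivity
      · rw [eval_mul, eval_C]
        have hple := pairPoly_eval_one_le A b i lst
        have hpnn := NNC.eval_one_nonneg (pairPoly_NNC A b i lst)
        have hnle' : (n i : ℝ) ≤ (A : ℝ) := by
          have : n i ≤ A := by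
            have h4 : i = (i.castPred h2).castSucc := (Fin.castSucc_castPred i h2).symm
            rw [h4]
            exact hnle _
          exact_mod_cast this
        have hc1 : (n i : ℝ) / ((A:ℝ) * ((A+b:ℕ):ℝ)) ≤ 1 := by
          rw [div_le_one (by positivity)]
          calc (n i : ℝ) ≤ (A:ℝ) := hnle'
            _ ≤ (A:ℝ) * ((A+b:ℕ):ℝ) := le_mul_of_one_le_right (by positivity)
                (by exact_mod_cast (by omega : 1 ≤ A + b))
        calc (n i : ℝ) / ((A:ℝ) * ((A+b:ℕ):ℝ)) * eval (fun _ => (1:ℝ)) (pairPoly A b i lst)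
            ≤ 1 * (((A+b:ℕ)):ℝ)^3 := mul_le_mul hc1 hple hpnn zero_le_one
          _ = (((A+b:ℕ)):ℝ)^3 := one_mul _
      · rw [map_zero]; positivity
      · rw [eval_mul, eval_rename, map_pow, eval_X]
        have h5 : ((fun _ : Fin (k+2) => (1:ℝ)) ∘ (Fin.castSucc : Fin (k+1) → Fin (k+2)))
            = (fun _ : Fin (k+1) => (1:ℝ)) := rfl
        rw [h5, one_pow, mul_one]
        refine le_trans (hM' _ _) ?_
        have hle : ((A:ℕ):ℝ) ≤ (((A+b:ℕ)):ℝ) := by exact_mod_cast Nat.le_add_right A b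
        exact pow_le_pow_left₀ (by positivity) hle 3
    · -- the identity
      intro u
      rw [hNsum]
      have hterm : ∀ i' : Fin (k+1),
          ((n i'.castSucc : ℝ)/((A:ℕ):ℝ)) * u i'.castSucc ^ A * u lst ^ b
            = (n i'.castSucc : ℝ)/((A+b:ℕ):ℝ) * u i'.castSucc ^ (A+b)
              + (n i'.castSucc : ℝ) * b / ((A:ℝ) * ((A+b:ℕ):ℝ)) * u lst ^ (A+b)
              + (-((n i'.castSucc : ℝ)/((A:ℝ) * ((A+b:ℕ):ℝ))
                  * eval u (pairPoly A b i'.castSucc lst))) * (u i'.castSucc - u lst)^2 := by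
        intro i'
        have hp := pair_ident A b (A+b) hA1 hb1 rfl (u i'.castSucc) (u lst)
        rw [eval_pairPoly]
        have hab : (((A+b:ℕ)):ℝ) = (A:ℝ)+(b:ℝ) := by push_cast; ring
        have hab0 : (A:ℝ)+(b:ℝ) ≠ 0 := by rw [← hab]; exact hNR0
        rw [hab] at hp ⊢
        linear_combination (norm := skip) (-((n i'.castSucc : ℝ)) / ((A:ℝ)*((A:ℝ)+(b:ℝ)))) * hp
        field_simp
        ring
      have heval1 : ∀ i' : Fin (k+1), eval u (dd i'.castSucc lst)
          = (n i'.castSucc : ℝ)/((A:ℝ) * ((A+b:ℕ):ℝ)) * eval u (pairPoly A b i'.castSucc lst) := by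
        intro i'
        rw [hdd1, eval_mul, eval_C]
      have heval2 : ∀ i' j' : Fin (k+1), eval u (dd i'.castSucc j'.castSucc)
          = eval (u ∘ Fin.castSucc) (d' i' j') * u lst ^ b := by
        intro i' j'
        rw [hdd2, eval_mul, eval_rename, map_pow, eval_X]
      have hid := hI' (u ∘ Fin.castSucc)
      simp only [Function.comp_apply] at hid
      have hsumcast : ∑ i : Fin (k+1), (n i.castSucc : ℝ) = (A:ℝ) := by
        rw [hAdef]; push_cast; rfl
      have hmid : ∑ i : Fin (k+1), (n i.castSucc : ℝ) * b / ((A:ℝ) * ((A+b:ℕ):ℝ))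
          = (b:ℝ)/((A+b:ℕ):ℝ) := by
        rw [← Finset.sum_div, ← Finset.sum_mul, hsumcast]
        field_simp
      calc ∏ i, u i ^ n i
          = (∏ i : Fin (k+1), u i.castSucc ^ n i.castSucc) * u lst ^ b := by
            rw [Fin.prod_univ_castSucc]
        _ = ((∑ i : Fin (k+1), ((n i.castSucc : ℝ)/((A:ℕ):ℝ)) * u i.castSucc ^ A)
              + ∑ i : Fin (k+1), ∑ j : Fin (k+1), if i < j then
                  -(eval (u ∘ Fin.castSucc) (d' i j)) * (u i.castSucc - u j.castSucc)^2 else 0)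
            * u lst ^ b := by rw [hid]
        _ = (∑ i : Fin (k+1), ((n i.castSucc : ℝ)/((A:ℕ):ℝ)) * u i.castSucc ^ A * u lst ^ b)
              + ∑ i : Fin (k+1), ∑ j : Fin (k+1), if i < j then
                  -(eval (u ∘ Fin.castSucc) (d' i j) * u lst ^ b)
                    * (u i.castSucc - u j.castSucc)^2 else 0 := by
            rw [add_mul, Finset.sum_mul, Finset.sum_mul]
            congr 1
            apply Finset.sum_congr rfl
            intro i _
            rw [Finset.sum_mul]
            apply Finset.sum_congr rfl
            intro j _
            split_ifs with h
            · ring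
            · rw [zero_mul]
        _ = ((∑ i : Fin (k+1), (n i.castSucc : ℝ)/((A+b:ℕ):ℝ) * u i.castSucc ^ (A+b))
              + (b:ℝ)/((A+b:ℕ):ℝ) * u lst ^ (A+b)
              + ∑ i : Fin (k+1), (-((n i.castSucc : ℝ)/((A:ℝ) * ((A+b:ℕ):ℝ))
                  * eval u (pairPoly A b i.castSucc lst))) * (u i.castSucc - u lst)^2)
              + ∑ i : Fin (k+1), ∑ j : Fin (k+1), if i < j then
                  -(eval (u ∘ Fin.castSucc) (d' i j) * u lst ^ b)
                    * (u i.castSucc - u j.castSucc)^2 else 0 := by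
            congr 1
            rw [Finset.sum_congr rfl (fun i _ => hterm i), Finset.sum_add_distrib,
              Finset.sum_add_distrib, ← Finset.sum_mul, hmid]
        _ = (∑ i : Fin (k+2), (n i : ℝ)/((A+b:ℕ):ℝ) * u i ^ (A+b))
              + ∑ i : Fin (k+2), ∑ j : Fin (k+2), if i < j then
                  -(eval u (dd i j)) * (u i - u j)^2 else 0 := by
            have hps : ∑ i : Fin (k+2), (n i : ℝ)/((A+b:ℕ):ℝ) * u i ^ (A+b)
                = (∑ i : Fin (k+1), (n i.castSucc : ℝ)/((A+b:ℕ):ℝ) * u i.castSucc ^ (A+b))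
                  + (n lst : ℝ)/((A+b:ℕ):ℝ) * u lst ^ (A+b) := by
              rw [Fin.sum_univ_castSucc]
            have hdb : ∑ i : Fin (k+2), ∑ j : Fin (k+2),
                  (if i < j then -(eval u (dd i j)) * (u i - u j)^2 else 0)
                = (∑ i : Fin (k+1), ∑ j : Fin (k+1), if i < j then
                    -(eval (u ∘ Fin.castSucc) (d' i j) * u lst ^ b)
                      * (u i.castSucc - u j.castSucc)^2 else 0)
                  + ∑ i : Fin (k+1), (-((n i.castSucc : ℝ)/((A:ℝ) * ((A+b:ℕ):ℝ))
                      * eval u (pairPoly A b i.castSucc lst))) * (u i.castSucc - u lst)^2 := by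
              rw [Fin.sum_univ_castSucc]
              have hlastrow : ∑ j : Fin (k+2),
                  (if lst < j then -(eval u (dd lst j)) * (u lst - u j)^2 else 0) = 0 :=
                Finset.sum_eq_zero fun j _ => by
                  rw [if_neg (Fin.not_lt.mpr (Fin.le_last j))]
              rw [hlastrow, add_zero, ← Finset.sum_add_distrib]
              apply Finset.sum_congr rfl
              intro i' _
              rw [Fin.sum_univ_castSucc]
              congr 1
              · apply Finset.sum_congr rfl
                intro j' _
                simp only [Fin.castSucc_lt_castSucc_iff]
                split_ifs with h
                · rw [heval2]
                · rfl
              · rw [if_pos (Fin.castSucc_lt_last i')]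
                try rw [heval1 i']
                try ring
            rw [hps, hdb, ← hbdef]
            ring

/-- In the monomial gradient decomposition there is an absolute constant `c` such that
for any `0 < U ≤ 1`, `sup_{|u_i| ≤ U} |d_{i,j}(u)| ≤ c · U^{N−2} · N³`. -/
theorem monomial_gradient_decomposition_bound :
    ∃ c : ℝ, 0 < c ∧
      ∀ (N k : ℕ), 2 ≤ N → ∀ (n : Fin k → ℕ), (∀ i, 1 ≤ n i) → (∑ i, n i = N) →
        ∃ (p : Fin k → ℝ) (d : Fin k → Fin k → MvPolynomial (Fin k) ℝ),
          (∀ i, 0 ≤ p i) ∧ (∑ i, p i = 1) ∧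
          (∀ i j, (d i j).totalDegree ≤ N - 2) ∧
          (∀ i j m, (d i j).coeff m ≤ 0) ∧
          (∀ u : Fin k → ℝ,
            ∏ i, u i ^ n i
              = ∑ i, p i * u i ^ N
                + ∑ i, ∑ j, if i < j then
                    MvPolynomial.eval u (d i j) * (u i - u j) ^ 2 else 0) ∧
          (∀ U : ℝ, 0 < U → U ≤ 1 →
            ∀ (u : Fin k → ℝ), (∀ i, |u i| ≤ U) →
              ∀ i j, |MvPolynomial.eval u (d i j)| ≤ c * U ^ (N - 2) * (N : ℝ) ^ 3) := by
  refine ⟨1, one_pos, ?_⟩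
  intro N k hN n hn hsum
  obtain _ | k := k
  · exfalso
    simp at hsum
    omega
  obtain ⟨d₀, hNNC, hHom, hZero, hMass, hId⟩ := main_ind k n hn
  have hN0 : ((N:ℕ):ℝ) ≠ 0 := Nat.cast_ne_zero.mpr (by omega)
  refine ⟨fun i => (n i : ℝ)/(N:ℝ), fun i j => -(d₀ i j), ?_, ?_, ?_, ?_, ?_, ?_⟩
  · intro i; positivity
  · rw [← Finset.sum_div, ← Nat.cast_sum, hsum, div_self hN0]
  · intro i j
    rw [totalDegree_neg]
    have := (hHom i j).totalDegree_le
    rwa [hsum] at this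
  · intro i j m
    rw [coeff_neg]
    exact neg_nonpos.mpr (hNNC i j m)
  · intro u
    have h := hId u
    rw [hsum] at h
    simp only [map_neg]
    exact h
  · intro U hU0 hU1 u hu i j
    rw [map_neg, abs_neg]
    have h1 := NNC.eval_abs_le (hNNC i j) (hHom i j) hU0.le u hu
    rw [hsum] at h1
    have h2 := hMass i j
    rw [hsum] at h2
    calc |eval u (d₀ i j)| ≤ eval (fun _ => (1:ℝ)) (d₀ i j) * U ^ (N - 2) := h1
      _ ≤ ((N:ℕ):ℝ)^3 * U ^ (N - 2) :=
          mul_le_mul_of_nonneg_right h2 (pow_nonneg hU0.le _)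
      _ = 1 * U ^ (N - 2) * (N:ℝ)^3 := by ring
end

section
/- The case k = 2 of the monomial gradient decomposition: for integers n, m ≥ 1 with n + m = N, u^n v^m = (n/N) u^N + (m/N) v^N − d(u,v)(u−v)² for some polynomial d(u,v) of degree N−2 with nonnegative coefficients, for all real u, v. In particular with n = m = 1, d = 1/2. -/
/-!
Put `N = n + m` and `e j = min (m j) (n (N - j))`, which is `N / 2` times the Green function
of the simple random walk started at `n` and killed at `0` and `N`. Then `e 0 = e N = 0` and
`e` is piecewise linear with slopes `m` and `-n`, so `e k - e (k + 1) = n - N [k < n]`.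
Summation by parts gives
`(u - v) ∑ e (j + 1) u^j v^(N-2-j) = ∑ (e k - e (k + 1)) u^k v^(N-1-k) = n G_N - N v^m G_n`,
where `G_k = (u^k - v^k) / (u - v)` are geometric sums, and one more factor `u - v` turns the
right side into `n u^N + m v^N - N u^n v^m`. Hence `d = ∑ e (j + 1) / N u^j v^(N-2-j)`.
-/

open Finset

theorem sub_mul_sum_range_telescope {R : Type*} [CommRing R] (e : ℕ → R) (u v : R) (M : ℕ)
    (h0 : e 0 = 0) (hM : e (M + 1) = 0) :
    (u - v) * ∑ j ∈ range M, e (j + 1) * u ^ j * v ^ (M - 1 - j)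
      = ∑ k ∈ range (M + 1), (e k - e (k + 1)) * u ^ k * v ^ (M - k) := by
  simp only [sub_mul, sum_sub_distrib]
  rw [sum_range_succ', sum_range_succ (fun k => e (k + 1) * u ^ k * v ^ (M - k)), h0, hM,
    mul_sum, mul_sum, ← sum_sub_distrib]
  simp only [zero_mul, add_zero, ← sum_sub_distrib]
  refine sum_congr rfl fun j hj => ?_
  obtain ⟨i, rfl⟩ : ∃ i, M = j + 1 + i := ⟨M - (j + 1), by have := mem_range.1 hj; omega⟩
  rw [show j + 1 + i - 1 - j = i by omega, show j + 1 + i - (j + 1) = i by omega,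
    show j + 1 + i - j = i + 1 by omega]
  ring

def greenWeight (n m j : ℕ) : ℕ := min (m * j) (n * (n + m - j))

namespace greenWeight

variable {n m j : ℕ}

theorem of_le (hj : j ≤ n) : greenWeight n m j = m * j :=
  min_eq_left <| calc
    m * j ≤ m * n := Nat.mul_le_mul_left m hj
    _ = n * m := mul_comm m n
    _ ≤ n * (n + m - j) := Nat.mul_le_mul_left n (by omega)

theorem of_ge (hj : n ≤ j) : greenWeight n m j = n * (n + m - j) :=
  min_eq_right <| calc
    n * (n + m - j) ≤ n * m := Nat.mul_le_mul_left n (by omega)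
    _ = m * n := mul_comm n m
    _ ≤ m * j := Nat.mul_le_mul_left m hj

@[simp] theorem zero_right : greenWeight n m 0 = 0 := by simp [greenWeight]

@[simp] theorem add_right : greenWeight n m (n + m) = 0 := by simp [greenWeight]

theorem cast_sub_succ {R : Type*} [CommRing R] (hj : j < n + m) :
    (greenWeight n m j : R) - greenWeight n m (j + 1) = n - if j < n then (n + m : R) else 0 := by
  split_ifs with h
  · rw [of_le h.le, of_le h]; push_cast; ring
  · rw [of_ge (not_lt.1 h), of_ge (by omega), Nat.cast_mul, Nat.cast_mul,
      Nat.cast_sub hj.le, Nat.cast_sub (by omega)]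
    push_cast; ring

end greenWeight

theorem sum_greenWeight_sub_succ_mul {R : Type*} [CommRing R] (n m : ℕ) (u v : R) :
    ∑ k ∈ range (n + m),
        ((greenWeight n m k : R) - greenWeight n m (k + 1)) * u ^ k * v ^ (n + m - 1 - k)
      = n * ∑ k ∈ range (n + m), u ^ k * v ^ (n + m - 1 - k)
        - (n + m) * v ^ m * ∑ k ∈ range n, u ^ k * v ^ (n - 1 - k) := by
  rw [sum_congr rfl fun k hk => by rw [greenWeight.cast_sub_succ (mem_range.1 hk)]]
  have hfilter : (range (n + m)).filter (· < n) = range n := by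
    ext; simp only [mem_filter, mem_range]; omega
  simp only [sub_mul, ite_mul, zero_mul, sum_sub_distrib, sum_ite, hfilter, sum_const_zero,
    add_zero, mul_sum]
  congr 1
  · exact sum_congr rfl fun k _ => by ring
  · refine sum_congr rfl fun k hk => ?_
    rw [show n + m - 1 - k = (n - 1 - k) + m by have := mem_range.1 hk; omega, pow_add]
    ring

theorem sq_sub_mul_sum_greenWeight {R : Type*} [CommRing R] (n m : ℕ) (u v : R) :
    (u - v) ^ 2 * ∑ j ∈ range (n + m - 1),
        (greenWeight n m (j + 1) : R) * u ^ j * v ^ (n + m - 2 - j)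
      = n * u ^ (n + m) + m * v ^ (n + m) - (n + m) * (u ^ n * v ^ m) := by
  obtain hnm | ⟨M, hM⟩ : n + m = 0 ∨ ∃ M, n + m = M + 1 :=
    (n + m).eq_zero_or_eq_succ_pred.imp id fun h => ⟨_, h⟩
  · obtain ⟨rfl, rfl⟩ : n = 0 ∧ m = 0 := by omega
    simp
  have htel : (u - v) * ∑ j ∈ range (n + m - 1),
        (greenWeight n m (j + 1) : R) * u ^ j * v ^ (n + m - 2 - j)
      = ∑ k ∈ range (n + m), ((greenWeight n m k : R) - greenWeight n m (k + 1))
        * u ^ k * v ^ (n + m - 1 - k) := by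
    have := sub_mul_sum_range_telescope (fun k => (greenWeight n m k : R)) u v M
      (by simp) (by simp [← hM])
    rw [hM]
    simpa only [Nat.add_sub_cancel, show ∀ j, M + 1 - 2 - j = M - 1 - j from fun j => by omega]
  calc _ = (u - v) * ((u - v) * ∑ j ∈ range (n + m - 1),
          (greenWeight n m (j + 1) : R) * u ^ j * v ^ (n + m - 2 - j)) := by
        rw [sq, mul_assoc]
    _ = (u - v) * (n * ∑ k ∈ range (n + m), u ^ k * v ^ (n + m - 1 - k)
        - (n + m) * v ^ m * ∑ k ∈ range n, u ^ k * v ^ (n - 1 - k)) := by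
        rw [htel, sum_greenWeight_sub_succ_mul]
    _ = n * (u ^ (n + m) - v ^ (n + m)) - (n + m) * v ^ m * (u ^ n - v ^ n) := by
        rw [← geom_sum₂_mul, ← geom_sum₂_mul]; ring
    _ = _ := by ring

section BinaryForm

open MvPolynomial

variable {R : Type*}

noncomputable def binaryForm [CommSemiring R] (D : ℕ) (c : ℕ → R) : MvPolynomial (Fin 2) R :=
  ∑ j ∈ range (D + 1), monomial (Finsupp.single 0 j + Finsupp.single 1 (D - j)) (c j)

theorem eval_binaryForm [CommSemiring R] (D : ℕ) (c : ℕ → R) (u v : R) :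
    eval ![u, v] (binaryForm D c) = ∑ j ∈ range (D + 1), c j * u ^ j * v ^ (D - j) := by
  simp [binaryForm, eval_monomial, Finsupp.prod_add_index', pow_add, mul_assoc]

theorem totalDegree_binaryForm_le [CommSemiring R] (D : ℕ) (c : ℕ → R) :
    (binaryForm D c).totalDegree ≤ D := by
  refine (totalDegree_finsetSum _ _).trans <| Finset.sup_le fun j hj => ?_
  refine (totalDegree_monomial_le _ _).trans ?_
  rw [Finsupp.sum_add_index' (fun _ => rfl) fun _ _ _ => rfl, Finsupp.sum_single_index rfl,
    Finsupp.sum_single_index rfl]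
  exact (Nat.add_sub_of_le (Nat.lt_succ_iff.1 (mem_range.1 hj))).le

theorem coeff_binaryForm_nonneg [CommSemiring R] [PartialOrder R] [IsOrderedRing R] {c : ℕ → R}
    (hc : ∀ j, 0 ≤ c j) (D : ℕ) (μ : Fin 2 →₀ ℕ) : 0 ≤ (binaryForm D c).coeff μ := by
  rw [binaryForm, coeff_sum]
  exact sum_nonneg fun j _ => by rw [coeff_monomial]; split_ifs <;> simp [hc]

@[simp] theorem binaryForm_zero [CommSemiring R] (c : ℕ → R) : binaryForm 0 c = C (c 0) := by
  simp [binaryForm]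

end BinaryForm

/-- The two-variable case of the monomial gradient decomposition: for `n, m ≥ 1`,
`N = n + m`, one has `u^n v^m = (n/N) u^N + (m/N) v^N − d(u,v)(u−v)²` for a polynomial
`d` of degree `N−2` with nonnegative coefficients; for `n = m = 1`, `d = 1/2`. -/
theorem monomial_gradient_decomposition_two_vars (n m N : ℕ)
    (hn : 1 ≤ n) (hm : 1 ≤ m) (hN : N = n + m) :
    ∃ d : MvPolynomial (Fin 2) ℝ,
      d.totalDegree ≤ N - 2 ∧
      (∀ μ, 0 ≤ d.coeff μ) ∧
      (∀ u v : ℝ,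
        u ^ n * v ^ m
          = (n / N : ℝ) * u ^ N + (m / N : ℝ) * v ^ N
            - MvPolynomial.eval ![u, v] d * (u - v) ^ 2) ∧
      (n = 1 → m = 1 → d = MvPolynomial.C (1 / 2)) := by
  subst hN
  refine ⟨binaryForm (n + m - 2) fun j => (greenWeight n m (j + 1) : ℝ) / (n + m),
    totalDegree_binaryForm_le _ _, coeff_binaryForm_nonneg (fun j => by positivity) _,
    fun u v => ?_, ?_⟩
  · have key := sq_sub_mul_sum_greenWeight n m u v
    rw [eval_binaryForm, show n + m - 2 + 1 = n + m - 1 by omega]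
    simp only [div_mul_eq_mul_div, ← sum_div]
    push_cast
    field_simp
    linear_combination key
  · rintro rfl rfl
    norm_num [greenWeight]
end

section
/- Let ξ(u) = (artanh(u) − u)(1 − u²) for u ∈ (−1,1). Then ξ'(u) = u² − 2u·Σ_{k=1}^∞ u^{2k+1}/(2k+1) = u² − u·(log((1+u)/(1−u)) − 2u), and sup_{|u|<1} ξ'(u) < 3/8. -/
/-- The inverse hyperbolic tangent `artanh u = ½ log((1+u)/(1−u))`. -/
noncomputable def artanh (u : ℝ) : ℝ := (1 / 2) * Real.log ((1 + u) / (1 - u))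

/-- `ξ(u) = (artanh u − u)(1 − u²)`. -/
noncomputable def xiFun : ℝ → ℝ := fun u => (artanh u - u) * (1 - u ^ 2)

lemma artanh_hasSum {u : ℝ} (h : |u| < 1) :
    HasSum (fun k : ℕ => u ^ (2 * k + 1) / (2 * k + 1 : ℝ)) (artanh u) := by
  have h1 : (0:ℝ) < 1 + u := by cases abs_lt.1 h; linarith
  have h2 : (0:ℝ) < 1 - u := by cases abs_lt.1 h; linarith
  have := (Real.hasSum_log_sub_log_of_abs_lt_one h).mul_left (1/2)
  have heq : (fun k : ℕ => (1/2 : ℝ) * ((2 : ℝ) * (1 / (2 * k + 1)) * u ^ (2 * k + 1)))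
      = fun k : ℕ => u ^ (2 * k + 1) / (2 * k + 1 : ℝ) := by
    ext k; field_simp
  rw [heq] at this
  have hlog : artanh u = (1/2) * (Real.log (1 + u) - Real.log (1 - u)) := by
    rw [artanh, Real.log_div (by linarith) (by linarith)]
  rw [hlog]
  exact this

lemma artanh_hasDerivAt {u : ℝ} (h1 : -1 < u) (h2 : u < 1) :
    HasDerivAt artanh (1 / (1 - u ^ 2)) u := by
  have hp : (0:ℝ) < 1 + u := by linarith
  have hm : (0:ℝ) < 1 - u := by linarith
  have d1 : HasDerivAt (fun x : ℝ => Real.log (1 + x)) (1 / (1 + u)) u := by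
    have := ((hasDerivAt_id u).const_add 1).log (by simpa using hp.ne')
    simpa using this
  have d2 : HasDerivAt (fun x : ℝ => Real.log (1 - x)) (-1 / (1 - u)) u := by
    have := ((hasDerivAt_id u).const_sub 1).log (by simpa using hm.ne')
    simpa using this
  have d : HasDerivAt (fun x : ℝ => (1/2) * (Real.log (1 + x) - Real.log (1 - x)))
      ((1/2) * (1 / (1 + u) - (-1 / (1 - u)))) u := ((d1.sub d2).const_mul _)
  have heq : (fun x : ℝ => (1/2) * (Real.log (1 + x) - Real.log (1 - x))) =ᶠ[nhds u] artanh := by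
    filter_upwards [Ioo_mem_nhds h1 h2] with x hx
    have : (0:ℝ) < 1 + x := by linarith [hx.1]
    have : (0:ℝ) < 1 - x := by linarith [hx.2]
    rw [artanh, Real.log_div (by linarith) (by linarith)]
  have := d.congr_of_eventuallyEq heq.symm
  refine this.congr_deriv ?_
  have hne2 : (1:ℝ) + u ≠ 0 := hp.ne'
  have hne3 : (1:ℝ) - u ≠ 0 := hm.ne'
  have hq : (1:ℝ) - u ^ 2 ≠ 0 := by nlinarith
  field_simp
  ring

/-- On `(−1,1)`, `ξ'(u) = u² − 2u ∑_{k≥1} u^{2k+1}/(2k+1) = u² − u (log((1+u)/(1−u)) − 2u)`,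
and `ξ'(u) < 3/8`. -/
theorem xiFun_deriv_bound (u : ℝ) (hu : u ∈ Set.Ioo (-1 : ℝ) 1) :
    deriv xiFun u = u ^ 2 - 2 * u * ∑' k : ℕ, u ^ (2 * (k + 1) + 1) / (2 * (k + 1) + 1 : ℝ) ∧
    deriv xiFun u = u ^ 2 - u * (Real.log ((1 + u) / (1 - u)) - 2 * u) ∧
    deriv xiFun u < 3 / 8 := by
  obtain ⟨h1, h2⟩ := hu
  have habs : |u| < 1 := abs_lt.2 ⟨h1, h2⟩
  have hne : (1 : ℝ) - u ^ 2 ≠ 0 := by nlinarith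
  -- derivative
  have hd : HasDerivAt xiFun (u ^ 2 - 2 * u * (artanh u - u)) u := by
    have := ((artanh_hasDerivAt h1 h2).sub (hasDerivAt_id u)).mul
      (((hasDerivAt_id u).pow 2).const_sub 1)
    refine this.congr_deriv ?_
    simp only [Pi.sub_apply, Pi.pow_apply, id]
    field_simp
    ring
  have hderiv : deriv xiFun u = u ^ 2 - 2 * u * (artanh u - u) := hd.deriv
  -- series
  have hsum := artanh_hasSum habs
  have hshift : HasSum (fun k : ℕ => u ^ (2 * (k + 1) + 1) / (2 * (k + 1) + 1 : ℝ))
      (artanh u - u) := by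
    have := (hasSum_nat_add_iff' (f := fun k : ℕ => u ^ (2 * k + 1) / (2 * k + 1 : ℝ)) 1).2 hsum
    simpa using this
  have htsum : ∑' k : ℕ, u ^ (2 * (k + 1) + 1) / (2 * (k + 1) + 1 : ℝ) = artanh u - u :=
    hshift.tsum_eq
  refine ⟨by rw [hderiv, htsum], ?_, ?_⟩
  · rw [hderiv, artanh]; ring
  · -- bound: artanh u - u ≥ u^3/3 + u^5/5 when multiplied by u... use u * (artanh u - u)
    have hmul : HasSum (fun k : ℕ => u * (u ^ (2 * (k + 1) + 1) / (2 * (k + 1) + 1 : ℝ)))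
        (u * (artanh u - u)) := hshift.mul_left u
    have hnonneg : ∀ k : ℕ, 0 ≤ u * (u ^ (2 * (k + 1) + 1) / (2 * (k + 1) + 1 : ℝ)) := by
      intro k
      have heq : u * (u ^ (2 * (k + 1) + 1) / (2 * (k + 1) + 1 : ℝ))
          = (u ^ (k + 2)) ^ 2 / (2 * (k + 1) + 1 : ℝ) := by
        rw [mul_div_assoc']
        congr 1
        ring
      rw [heq]
      positivity
    have hlb : u ^ 4 / 3 + u ^ 6 / 5 ≤ u * (artanh u - u) := by
      have hs := sum_le_hasSum (Finset.range 2) (fun k _ => hnonneg k) hmul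
      have he : ∑ k ∈ Finset.range 2, u * (u ^ (2 * (k + 1) + 1) / (2 * (k + 1) + 1 : ℝ))
          = u ^ 4 / 3 + u ^ 6 / 5 := by
        norm_num [Finset.sum_range_succ]
        ring
      linarith [he ▸ hs]
    rw [hderiv]
    nlinarith [sq_nonneg (u^2 - 1), sq_nonneg u, sq_nonneg (u^3), sq_nonneg (u^2 - 3/4),
      sq_nonneg (u^3 - u)]
end
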